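/- Let n ≥ 1, 0 < β < 1, α ∈ ℝ, and let f : ℝⁿ → ℝ be locally integrable with finite Campanato norm ‖f‖_{E^{α,1}}. Let B = B(x₀,r) be a ball, x ∈ B, and t > 8r. Then ∫_{{y : 8r ≤ |x−y| < t}} r^β |f(y) − f_B| / |x−y|^{n−1+β} dy is at most c r^{β+α} t^{1−β} ‖f‖_{E^{α,1}} if α < 0, at most c r^β t^{1−β} log(t/r) ‖f‖_{E^{α,1}} if α = 0, and at most c r^β t^{1−β+α} ‖f‖_{E^{α,1}} if α > 0, with c depending only on n, β and α. -/

import Mathlib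

open MeasureTheory Metric ENNReal

noncomputable def ballAvg (n : ℕ) (f : EuclideanSpace ℝ (Fin n) → ℝ)
    (c : EuclideanSpace ℝ (Fin n)) (r : ℝ) : ℝ :=
  (volume (closedBall c r)).toReal⁻¹ * ∫ y in closedBall c r, f y

noncomputable def bmoNorm (n : ℕ) (f : EuclideanSpace ℝ (Fin n) → ℝ) : ℝ≥0∞ :=
  ⨆ (c : EuclideanSpace ℝ (Fin n)) (r : ℝ) (_ : 0 < r),
    ENNReal.ofReal ((volume (closedBall c r)).toReal⁻¹ *
      ∫ y in closedBall c r, |f y - ballAvg n f c r|)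

noncomputable def campanatoNorm (n : ℕ) (α p : ℝ) (f : EuclideanSpace ℝ (Fin n) → ℝ) : ℝ≥0∞ :=
  ⨆ (c : EuclideanSpace ℝ (Fin n)) (r : ℝ) (_ : 0 < r),
    ENNReal.ofReal ((volume (closedBall c r)).toReal ^ (-(α / n)) *
      ((volume (closedBall c r)).toReal⁻¹ *
        ∫ y in closedBall c r, |f y - ballAvg n f c r| ^ p) ^ (1 / p))

noncomputable def campanato1Norm (n : ℕ) (α : ℝ) (f : EuclideanSpace ℝ (Fin n) → ℝ) : ℝ≥0∞ :=
  ⨆ (c : EuclideanSpace ℝ (Fin n)) (r : ℝ) (_ : 0 < r),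
    ENNReal.ofReal ((volume (closedBall c r)).toReal ^ (-(α / n)) *
      ((volume (closedBall c r)).toReal⁻¹ *
        ∫ y in closedBall c r, |f y - ballAvg n f c r|))

noncomputable def lipNorm (n : ℕ) (γ : ℝ) (f : EuclideanSpace ℝ (Fin n) → ℝ) : ℝ≥0∞ :=
  ⨆ (x : EuclideanSpace ℝ (Fin n)) (y : EuclideanSpace ℝ (Fin n)) (_ : x ≠ y),
    ENNReal.ofReal (|f x - f y| / ‖x - y‖ ^ γ)

/-!
Split the annulus into the dyadic shells `8r·2^k ≤ |x - y| < 8r·2^(k+1)`, `2^k ≤ t/(8r)`. On the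
k-th shell `|x - y|^(-(n-1+β)) ≤ (8r·2^k)^(-(n-1+β))`, and the shell lies in the ball `2^(k+5) B`.
Comparing `f_B` with `f_{2^(k+5) B}` along the chain of doubled balls, each step costing
`≲ |2^j B|^(α/n) ‖f‖` by the Campanato bound, gives
`∫_{2^(k+5) B} |f - f_B| ≲ |2^(k+5) B| r^α ∑_{j ≤ k+5} 2^(jα) ‖f‖`, so the k-th shell contributes
`≲ (2^k r)^(1-β) r^(β+α) ∑_{j ≤ k+5} 2^(jα) ‖f‖`. The inner sum is bounded for `α < 0`, is `k + 5`
for `α = 0` and is `≲ 2^(kα)` for `α > 0`; summing the resulting geometric series in `k` gives the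
three regimes.
-/

lemma geom_sum_range_succ_le {q : ℝ} (hq : 1 < q) (K : ℕ) :
    ∑ k ∈ Finset.range (K + 1), q ^ k ≤ q / (q - 1) * q ^ K := by
  have hq1 : 0 < q - 1 := sub_pos.2 hq
  rw [geom_sum_eq hq.ne', div_mul_eq_mul_div, ← pow_succ']
  gcongr
  linarith

lemma sum_pow_mul_le_of_le_mul_pow {q p a : ℝ} (hq : 0 ≤ q) (hqp : 1 < q * p) (ha : 0 ≤ a)
    {K : ℕ} {D : ℕ → ℝ} (hD : ∀ k ≤ K, D k ≤ a * p ^ k) :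
    ∑ k ∈ Finset.range (K + 1), q ^ k * D k ≤ a * (q * p / (q * p - 1)) * (q * p) ^ K := by
  calc ∑ k ∈ Finset.range (K + 1), q ^ k * D k
      ≤ ∑ k ∈ Finset.range (K + 1), a * (q * p) ^ k := by
        refine Finset.sum_le_sum fun k hk => ?_
        rw [mul_pow, mul_left_comm]
        gcongr
        exact hD k (Nat.lt_succ_iff.1 (Finset.mem_range.1 hk))
    _ ≤ _ := by
        rw [← Finset.mul_sum, mul_assoc]
        gcongr
        exact geom_sum_range_succ_le hqp K

lemma sum_range_pow_succ_le_of_lt_one {s : ℝ} (hs0 : 0 ≤ s) (hs1 : s < 1) (m : ℕ) :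
    ∑ j ∈ Finset.range m, s ^ (j + 1) ≤ s / (1 - s) := by
  have hgeom := geom_sum_mul_neg s m
  rw [le_div_iff₀ (sub_pos.2 hs1)]
  simp_rw [pow_succ']
  rw [← Finset.mul_sum, mul_assoc, hgeom]
  nlinarith [pow_nonneg hs0 m]

lemma sum_range_pow_succ_le_of_one_lt {s : ℝ} (hs1 : 1 < s) (m : ℕ) :
    ∑ j ∈ Finset.range m, s ^ (j + 1) ≤ s ^ (m + 1) / (s - 1) := by
  have hgeom := geom_sum_mul s m
  rw [le_div_iff₀ (sub_pos.2 hs1)]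
  simp_rw [pow_succ' s]
  rw [← Finset.mul_sum, mul_assoc, hgeom]
  linarith

lemma MeasureTheory.LocallyIntegrable.integrableOn_closedBall_abs_sub {X : Type*}
    [PseudoMetricSpace X] [ProperSpace X] [MeasurableSpace X] {μ : Measure X}
    [IsFiniteMeasureOnCompacts μ]
    {f : X → ℝ} (hf : LocallyIntegrable f μ) (c : X) (ρ m : ℝ) :
    IntegrableOn (fun y => |f y - m|) (closedBall c ρ) μ :=
  ((hf.integrableOn_isCompact (isCompact_closedBall c ρ)).sub
    (integrableOn_const measure_closedBall_lt_top.ne)).abs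

lemma lintegral_shell_div_rpow_le {E : Type*} [NormedAddCommGroup E] [MeasurableSpace E]
    [OpensMeasurableSpace E] {μ : Measure E} {h : E → ℝ} {s : Set E} (hh : IntegrableOn h s μ)
    (h0 : ∀ y, 0 ≤ h y) (x : E) {a b e : ℝ} (ha : 0 < a) (he : 0 ≤ e)
    (hs : {y | a ≤ ‖x - y‖ ∧ ‖x - y‖ < b} ⊆ s) :
    ∫⁻ y in {y | a ≤ ‖x - y‖ ∧ ‖x - y‖ < b}, ENNReal.ofReal (h y / ‖x - y‖ ^ e) ∂μ
      ≤ ENNReal.ofReal (a ^ (-e) * ∫ y in s, h y ∂μ) := by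
  have hdist : Measurable fun y => ‖x - y‖ := (continuous_const.sub continuous_id).norm.measurable
  have hshell : MeasurableSet {y | a ≤ ‖x - y‖ ∧ ‖x - y‖ < b} :=
    (measurableSet_le measurable_const hdist).inter (measurableSet_lt hdist measurable_const)
  calc ∫⁻ y in {y | a ≤ ‖x - y‖ ∧ ‖x - y‖ < b}, ENNReal.ofReal (h y / ‖x - y‖ ^ e) ∂μ
      ≤ ∫⁻ y in {y | a ≤ ‖x - y‖ ∧ ‖x - y‖ < b}, ENNReal.ofReal (a ^ (-e) * h y) ∂μ := by
        refine setLIntegral_mono' hshell fun y hy => ENNReal.ofReal_le_ofReal ?_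
        rw [Real.rpow_neg ha.le, ← div_eq_inv_mul]
        exact div_le_div_of_nonneg_left (h0 y) (by positivity) (by gcongr; exact hy.1)
    _ ≤ ∫⁻ y in s, ENNReal.ofReal (a ^ (-e) * h y) ∂μ := lintegral_mono_set hs
    _ = ENNReal.ofReal (a ^ (-e) * ∫ y in s, h y ∂μ) := by
        rw [← integral_const_mul, ofReal_integral_eq_lintegral_ofReal (hh.const_mul _)
          (.of_forall fun y => by have := h0 y; positivity)]

lemma lintegral_annulus_le_sum_dyadicShells {E : Type*} [NormedAddCommGroup E] [MeasurableSpace E]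
    {μ : Measure E} (g : E → ℝ≥0∞) (x : E) {a t : ℝ} (ha : 0 < a) {K : ℕ}
    (hK : t ≤ a * 2 ^ (K + 1)) :
    ∫⁻ y in {y | a ≤ ‖x - y‖ ∧ ‖x - y‖ < t}, g y ∂μ
      ≤ ∑ k ∈ Finset.range (K + 1),
          ∫⁻ y in {y | a * 2 ^ k ≤ ‖x - y‖ ∧ ‖x - y‖ < a * 2 ^ (k + 1)}, g y ∂μ := by
  set shell : ℕ → Set E := fun k => {y | a * 2 ^ k ≤ ‖x - y‖ ∧ ‖x - y‖ < a * 2 ^ (k + 1)}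
  have hcover : {y | a ≤ ‖x - y‖ ∧ ‖x - y‖ < t} ⊆ ⋃ k : Finset.range (K + 1), shell k := by
    rintro y ⟨hay, hyt⟩
    obtain ⟨k, hk, hk'⟩ := exists_nat_pow_near ((one_le_div ha).2 hay) one_lt_two
    have hkK : k < K + 1 := by
      refine (pow_lt_pow_iff_right₀ (M₀ := ℝ) one_lt_two).1 (hk.trans_lt ?_)
      rw [div_lt_iff₀ ha]; linarith
    refine Set.mem_iUnion.2 ⟨⟨k, Finset.mem_range.2 hkK⟩, ?_, ?_⟩
    · rwa [le_div_iff₀ ha, mul_comm] at hk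
    · rwa [div_lt_iff₀ ha, mul_comm] at hk'
  calc ∫⁻ y in {y | a ≤ ‖x - y‖ ∧ ‖x - y‖ < t}, g y ∂μ
      ≤ ∫⁻ y in ⋃ k : Finset.range (K + 1), shell k, g y ∂μ := lintegral_mono_set hcover
    _ ≤ ∑' k : Finset.range (K + 1), ∫⁻ y in shell k, g y ∂μ := lintegral_iUnion_le _ _
    _ = _ := Finset.tsum_subtype _ fun k => ∫⁻ y in shell k, g y ∂μ

lemma two_pow_mul_rpow (m : ℕ) {ρ : ℝ} (hρ : 0 ≤ ρ) (α : ℝ) :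
    ((2 : ℝ) ^ m * ρ) ^ α = ((2 : ℝ) ^ α) ^ m * ρ ^ α := by
  rw [Real.mul_rpow (by positivity) hρ, Real.rpow_pow_comm zero_le_two]

noncomputable def unitBallVolume (n : ℕ) : ℝ :=
  (volume (ball (0 : EuclideanSpace ℝ (Fin n)) 1)).toReal

section Campanato

variable {n : ℕ} {α β : ℝ} {f : EuclideanSpace ℝ (Fin n) → ℝ} {c : EuclideanSpace ℝ (Fin n)} {ρ : ℝ}

lemma unitBallVolume_pos (n : ℕ) : 0 < unitBallVolume n :=
  ENNReal.toReal_pos (measure_ball_pos volume 0 one_pos).ne' measure_ball_lt_top.ne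

lemma volume_closedBall_toReal_pos (c : EuclideanSpace ℝ (Fin n)) (hρ : 0 < ρ) :
    0 < (volume (closedBall c ρ)).toReal :=
  ENNReal.toReal_pos (measure_closedBall_pos volume c hρ).ne' measure_closedBall_lt_top.ne

lemma volume_closedBall_toReal (c : EuclideanSpace ℝ (Fin n)) (hρ : 0 ≤ ρ) :
    (volume (closedBall c ρ)).toReal = ρ ^ n * unitBallVolume n := by
  rw [Measure.addHaar_closedBall volume c hρ, ENNReal.toReal_mul,
    ENNReal.toReal_ofReal (pow_nonneg hρ _), finrank_euclideanSpace_fin, unitBallVolume]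

lemma volume_closedBall_toReal_rpow (hn : n ≠ 0) (c : EuclideanSpace ℝ (Fin n)) (hρ : 0 ≤ ρ)
    (α : ℝ) :
    (volume (closedBall c ρ)).toReal ^ (α / n) = ρ ^ α * unitBallVolume n ^ (α / n) := by
  rw [volume_closedBall_toReal c hρ, Real.mul_rpow (pow_nonneg hρ _)
    (unitBallVolume_pos n).le, ← Real.rpow_natCast_mul hρ, mul_div_cancel₀ α (by exact_mod_cast hn)]

lemma abs_ballAvg_sub_le (hf : IntegrableOn f (closedBall c ρ)) (hρ : 0 < ρ) (m : ℝ) :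
    |ballAvg n f c ρ - m|
      ≤ (volume (closedBall c ρ)).toReal⁻¹ * ∫ y in closedBall c ρ, |f y - m| := by
  have hV := volume_closedBall_toReal_pos c hρ
  have hconst : IntegrableOn (fun _ => m) (closedBall c ρ) :=
    integrableOn_const measure_closedBall_lt_top.ne
  have hsub : ballAvg n f c ρ - m
      = (volume (closedBall c ρ)).toReal⁻¹ * ∫ y in closedBall c ρ, (f y - m) := by
    rw [integral_sub hf hconst, setIntegral_const, smul_eq_mul, Measure.real, mul_sub,
      inv_mul_cancel_left₀ hV.ne', ballAvg]
  rw [hsub, abs_mul, abs_inv, abs_of_pos hV]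
  gcongr
  exact abs_integral_le_integral_abs

lemma integral_abs_sub_ballAvg_le (hfin : campanato1Norm n α f ≠ ⊤)
    (c : EuclideanSpace ℝ (Fin n)) (hρ : 0 < ρ) :
    ∫ y in closedBall c ρ, |f y - ballAvg n f c ρ|
      ≤ (volume (closedBall c ρ)).toReal ^ (α / n) * (volume (closedBall c ρ)).toReal
          * (campanato1Norm n α f).toReal := by
  set V := (volume (closedBall c ρ)).toReal
  set I := ∫ y in closedBall c ρ, |f y - ballAvg n f c ρ|
  have hV : 0 < V := volume_closedBall_toReal_pos c hρ
  have hnorm : V ^ (-(α / n)) * (V⁻¹ * I) ≤ (campanato1Norm n α f).toReal := by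
    refine ENNReal.ofReal_le_iff_le_toReal hfin |>.mp ?_
    exact le_iSup_of_le c (le_iSup_of_le ρ (le_iSup_of_le hρ le_rfl))
  calc I = V ^ (α / n) * V * (V ^ (-(α / n)) * (V⁻¹ * I)) := by
        rw [Real.rpow_neg hV.le]
        field_simp
    _ ≤ _ := by gcongr

lemma abs_ballAvg_two_mul_sub_le (hn : n ≠ 0) (hf : LocallyIntegrable f volume)
    (hfin : campanato1Norm n α f ≠ ⊤) (c : EuclideanSpace ℝ (Fin n)) (hρ : 0 < ρ) :
    |ballAvg n f c (2 * ρ) - ballAvg n f c ρ|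
      ≤ 2 ^ n * unitBallVolume n ^ (α / n) * (campanato1Norm n α f).toReal * (2 * ρ) ^ α := by
  have h2ρ : 0 < 2 * ρ := by positivity
  set V := (volume (closedBall c ρ)).toReal
  set V₂ := (volume (closedBall c (2 * ρ))).toReal
  have hV : 0 < V := volume_closedBall_toReal_pos c hρ
  have hV₂ : V₂ = 2 ^ n * V := by
    simp only [V, V₂, volume_closedBall_toReal c h2ρ.le, volume_closedBall_toReal c hρ.le, mul_pow]
    ring
  have hf₂ : IntegrableOn f (closedBall c (2 * ρ)) :=
    hf.integrableOn_isCompact (isCompact_closedBall _ _)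
  have hsub : closedBall c ρ ⊆ closedBall c (2 * ρ) := closedBall_subset_closedBall (by linarith)
  calc |ballAvg n f c (2 * ρ) - ballAvg n f c ρ|
      ≤ V⁻¹ * ∫ y in closedBall c ρ, |f y - ballAvg n f c (2 * ρ)| := by
        rw [abs_sub_comm]; exact abs_ballAvg_sub_le (hf₂.mono_set hsub) hρ _
    _ ≤ V⁻¹ * ∫ y in closedBall c (2 * ρ), |f y - ballAvg n f c (2 * ρ)| := by
        gcongr
        · exact .of_forall fun _ => abs_nonneg _
        · exact hf.integrableOn_closedBall_abs_sub c _ _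
    _ ≤ V⁻¹ * (V₂ ^ (α / n) * V₂ * (campanato1Norm n α f).toReal) := by
        gcongr; exact integral_abs_sub_ballAvg_le hfin c h2ρ
    _ = _ := by
        rw [volume_closedBall_toReal_rpow hn c h2ρ.le, hV₂]
        field_simp

lemma abs_ballAvg_two_pow_mul_sub_le (hn : n ≠ 0) (hf : LocallyIntegrable f volume)
    (hfin : campanato1Norm n α f ≠ ⊤) (c : EuclideanSpace ℝ (Fin n)) (hρ : 0 < ρ) (m : ℕ) :
    |ballAvg n f c (2 ^ m * ρ) - ballAvg n f c ρ|
      ≤ 2 ^ n * unitBallVolume n ^ (α / n) * (campanato1Norm n α f).toReal * ρ ^ α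
        * ∑ j ∈ Finset.range m, ((2 : ℝ) ^ α) ^ (j + 1) := by
  induction m with
  | zero => simp
  | succ m ih =>
    have hstep := abs_ballAvg_two_mul_sub_le hn hf hfin c (by positivity : 0 < 2 ^ m * ρ)
    rw [← mul_assoc, ← pow_succ', two_pow_mul_rpow _ hρ.le] at hstep
    calc _ ≤ |ballAvg n f c (2 ^ (m + 1) * ρ) - ballAvg n f c (2 ^ m * ρ)|
          + |ballAvg n f c (2 ^ m * ρ) - ballAvg n f c ρ| := abs_sub_le _ _ _
      _ ≤ _ := by
        rw [Finset.sum_range_succ]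
        linarith

lemma integral_abs_sub_ballAvg_two_pow_mul_le (hn : n ≠ 0) (hf : LocallyIntegrable f volume)
    (hfin : campanato1Norm n α f ≠ ⊤) (c : EuclideanSpace ℝ (Fin n)) (hρ : 0 < ρ) {m : ℕ}
    (hm : m ≠ 0) :
    ∫ y in closedBall c (2 ^ m * ρ), |f y - ballAvg n f c ρ|
      ≤ (1 + 2 ^ n) * unitBallVolume n ^ (α / n) * (campanato1Norm n α f).toReal * ρ ^ α
        * (∑ j ∈ Finset.range m, ((2 : ℝ) ^ α) ^ (j + 1))
        * (volume (closedBall c (2 ^ m * ρ))).toReal := by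
  set R := (2 : ℝ) ^ m * ρ
  have hR : 0 < R := by positivity
  set V := (volume (closedBall c R)).toReal
  set N := (campanato1Norm n α f).toReal
  set S := ∑ j ∈ Finset.range m, ((2 : ℝ) ^ α) ^ (j + 1)
  have hfR := hf.integrableOn_closedBall_abs_sub c R (ballAvg n f c R)
  have hRα : R ^ α ≤ ρ ^ α * S := by
    obtain ⟨m, rfl⟩ := Nat.exists_eq_succ_of_ne_zero hm
    rw [two_pow_mul_rpow _ hρ.le, mul_comm]
    gcongr
    exact Finset.single_le_sum (f := fun j => ((2 : ℝ) ^ α) ^ (j + 1))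
      (fun _ _ => by positivity) (Finset.self_mem_range_succ m)
  calc ∫ y in closedBall c R, |f y - ballAvg n f c ρ|
      ≤ ∫ y in closedBall c R, (|f y - ballAvg n f c R| + |ballAvg n f c R - ballAvg n f c ρ|) :=
        integral_mono_of_nonneg (.of_forall fun _ => abs_nonneg _)
          (hfR.add (integrableOn_const measure_closedBall_lt_top.ne))
          (.of_forall fun _ => abs_sub_le _ _ _)
    _ = (∫ y in closedBall c R, |f y - ballAvg n f c R|)
          + V * |ballAvg n f c R - ballAvg n f c ρ| := by
        rw [integral_add hfR (integrableOn_const measure_closedBall_lt_top.ne),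
          setIntegral_const, smul_eq_mul, Measure.real]
    _ ≤ R ^ α * unitBallVolume n ^ (α / n) * V * N
          + V * (2 ^ n * unitBallVolume n ^ (α / n) * N * ρ ^ α * S) := by
        gcongr
        · rw [← volume_closedBall_toReal_rpow hn c hR.le]
          exact integral_abs_sub_ballAvg_le hfin c hR
        · exact abs_ballAvg_two_pow_mul_sub_le hn hf hfin c hρ m
    _ ≤ _ := by
        have := unitBallVolume_pos n
        have : 0 ≤ V := ENNReal.toReal_nonneg
        have : 0 ≤ N := ENNReal.toReal_nonneg
        have : R ^ α * unitBallVolume n ^ (α / n) * V * N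
            ≤ ρ ^ α * S * unitBallVolume n ^ (α / n) * V * N := by gcongr
        linarith

lemma lintegral_dyadicShell_le (hn : n ≠ 0) (hβ0 : 0 < β) (hf : LocallyIntegrable f volume)
    (hfin : campanato1Norm n α f ≠ ⊤) {x₀ x : EuclideanSpace ℝ (Fin n)} {r : ℝ} (hr : 0 < r)
    (hx : x ∈ closedBall x₀ r) (k : ℕ) :
    ∫⁻ y in {y : EuclideanSpace ℝ (Fin n) |
        8 * r * 2 ^ k ≤ ‖x - y‖ ∧ ‖x - y‖ < 8 * r * 2 ^ (k + 1)},
        ENNReal.ofReal (r ^ β * |f y - ballAvg n f x₀ r| / ‖x - y‖ ^ ((n : ℝ) - 1 + β))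
      ≤ ENNReal.ofReal (4 ^ n * (1 + 2 ^ n) * unitBallVolume n ^ (α / n) * unitBallVolume n
          * (campanato1Norm n α f).toReal * r ^ (β + α) * (8 * r * 2 ^ k) ^ (1 - β)
          * ∑ j ∈ Finset.range (k + 5), ((2 : ℝ) ^ α) ^ (j + 1)) := by
  set a := 8 * r * 2 ^ k
  have ha : 0 < a := by positivity
  have hR : (2 : ℝ) ^ (k + 5) * r = 4 * a := by simp only [a, pow_add]; ring
  have hshell : {y | a ≤ ‖x - y‖ ∧ ‖x - y‖ < 8 * r * 2 ^ (k + 1)}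
      ⊆ closedBall x₀ (2 ^ (k + 5) * r) := by
    rintro y ⟨-, hy⟩
    rw [mem_closedBall, hR]
    have : dist y x₀ ≤ ‖x - y‖ + r := by
      rw [← dist_eq_norm, dist_comm x y]; exact dist_triangle y x x₀ |>.trans (by gcongr; exact hx)
    have : 8 * r * 2 ^ (k + 1) = 2 * a := by simp only [a, pow_succ]; ring
    have : r ≤ a := by simp only [a]; nlinarith [one_le_pow₀ (M₀ := ℝ) one_le_two (n := k)]
    linarith
  have he : 0 ≤ (n : ℝ) - 1 + β := by
    have : (1 : ℝ) ≤ n := by exact_mod_cast Nat.one_le_iff_ne_zero.2 hn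
    linarith
  refine (lintegral_shell_div_rpow_le (h := fun y => r ^ β * |f y - ballAvg n f x₀ r|)
    ((hf.integrableOn_closedBall_abs_sub _ _ _).const_mul _) (fun _ => by positivity) x ha he
    hshell).trans (ENNReal.ofReal_le_ofReal ?_)
  have hosc := integral_abs_sub_ballAvg_two_pow_mul_le hn hf hfin x₀ hr (m := k + 5) (by omega)
  rw [volume_closedBall_toReal _ (by positivity)] at hosc
  have hscale : a ^ (-((n : ℝ) - 1 + β)) * (2 ^ (k + 5) * r) ^ n = 4 ^ n * a ^ (1 - β) := by
    rw [hR, mul_pow, mul_left_comm, ← Real.rpow_natCast a, ← Real.rpow_add ha]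
    ring_nf
  calc a ^ (-((n : ℝ) - 1 + β)) * ∫ y in closedBall x₀ (2 ^ (k + 5) * r),
        r ^ β * |f y - ballAvg n f x₀ r|
      = a ^ (-((n : ℝ) - 1 + β)) * r ^ β
          * ∫ y in closedBall x₀ (2 ^ (k + 5) * r), |f y - ballAvg n f x₀ r| := by
        rw [integral_const_mul, mul_assoc]
    _ ≤ a ^ (-((n : ℝ) - 1 + β)) * r ^ β * ((1 + 2 ^ n) * unitBallVolume n ^ (α / n)
          * (campanato1Norm n α f).toReal * r ^ α
          * (∑ j ∈ Finset.range (k + 5), ((2 : ℝ) ^ α) ^ (j + 1))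
          * ((2 ^ (k + 5) * r) ^ n * unitBallVolume n)) := by gcongr
    _ = _ := by
        rw [Real.rpow_add hr]
        linear_combination (1 + 2 ^ n) * unitBallVolume n ^ (α / n) * unitBallVolume n
          * (campanato1Norm n α f).toReal * r ^ β * r ^ α
          * (∑ j ∈ Finset.range (k + 5), ((2 : ℝ) ^ α) ^ (j + 1)) * hscale

/-- `δ` is the exponential growth rate of the telescoping sums in `k`: `δ = 0` when `α ≤ 0` and
`δ = α` when `α > 0`. -/
lemma lintegral_annulus_le (hn : n ≠ 0) (hβ0 : 0 < β) (hβ1 : β < 1)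
    (hf : LocallyIntegrable f volume) (hfin : campanato1Norm n α f ≠ ⊤)
    {x₀ x : EuclideanSpace ℝ (Fin n)} {r t : ℝ} (hr : 0 < r) (hx : x ∈ closedBall x₀ r)
    (hrt : 8 * r < t) {a δ : ℝ} (ha : 0 ≤ a) (hδ : 0 ≤ δ)
    (hD : ∀ k : ℕ, (2 : ℝ) ^ k ≤ t / (8 * r) →
      ∑ j ∈ Finset.range (k + 5), ((2 : ℝ) ^ α) ^ (j + 1) ≤ a * ((2 : ℝ) ^ δ) ^ k) :
    ∫⁻ y in {y : EuclideanSpace ℝ (Fin n) | 8 * r ≤ ‖x - y‖ ∧ ‖x - y‖ < t},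
        ENNReal.ofReal (r ^ β * |f y - ballAvg n f x₀ r| / ‖x - y‖ ^ ((n : ℝ) - 1 + β))
      ≤ ENNReal.ofReal (4 ^ n * (1 + 2 ^ n) * unitBallVolume n ^ (α / n) * unitBallVolume n
          * (campanato1Norm n α f).toReal * (2 ^ (1 - β + δ) / (2 ^ (1 - β + δ) - 1)) * a
          * r ^ (β + α) * (8 * r) ^ (-δ) * t ^ (1 - β + δ)) := by
  set M := 4 ^ n * (1 + 2 ^ n) * unitBallVolume n ^ (α / n) * unitBallVolume n
    * (campanato1Norm n α f).toReal
  set D : ℕ → ℝ := fun k => ∑ j ∈ Finset.range (k + 5), ((2 : ℝ) ^ α) ^ (j + 1)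
  set θ := 1 - β + δ
  have hM : 0 ≤ M := by have := unitBallVolume_pos n; positivity
  have h8r : 0 < 8 * r := by positivity
  have ht : 0 < t := h8r.trans hrt
  obtain ⟨K, hK, hK'⟩ := exists_nat_pow_near ((one_le_div h8r).2 hrt.le) one_lt_two
  rw [div_lt_iff₀ h8r, mul_comm] at hK'
  have hqp : (2 : ℝ) ^ (1 - β) * 2 ^ δ = 2 ^ θ := (Real.rpow_add two_pos _ _).symm
  have hθ : 1 < (2 : ℝ) ^ θ := Real.one_lt_rpow one_lt_two (by simp only [θ]; linarith)
  have hterm : ∀ k, M * r ^ (β + α) * (8 * r * 2 ^ k) ^ (1 - β) * D k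
      = M * r ^ (β + α) * (8 * r) ^ (1 - β) * (((2 : ℝ) ^ (1 - β)) ^ k * D k) := fun k => by
    rw [Real.mul_rpow h8r.le (by positivity), ← Real.rpow_pow_comm zero_le_two]
    ring
  have hgeom : ((2 : ℝ) ^ θ) ^ K ≤ (t / (8 * r)) ^ θ := by
    rw [Real.rpow_pow_comm zero_le_two]
    gcongr
  calc _ ≤ ∑ k ∈ Finset.range (K + 1), ∫⁻ y in {y : EuclideanSpace ℝ (Fin n) |
          8 * r * 2 ^ k ≤ ‖x - y‖ ∧ ‖x - y‖ < 8 * r * 2 ^ (k + 1)},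
          ENNReal.ofReal (r ^ β * |f y - ballAvg n f x₀ r| / ‖x - y‖ ^ ((n : ℝ) - 1 + β)) :=
        lintegral_annulus_le_sum_dyadicShells _ x h8r hK'.le
    _ ≤ ∑ k ∈ Finset.range (K + 1),
          ENNReal.ofReal (M * r ^ (β + α) * (8 * r * 2 ^ k) ^ (1 - β) * D k) :=
        Finset.sum_le_sum fun k _ => lintegral_dyadicShell_le hn hβ0 hf hfin hr hx k
    _ = ENNReal.ofReal (∑ k ∈ Finset.range (K + 1),
          M * r ^ (β + α) * (8 * r * 2 ^ k) ^ (1 - β) * D k) :=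
        (ENNReal.ofReal_sum_of_nonneg fun k _ => by positivity).symm
    _ ≤ _ := by
        refine ENNReal.ofReal_le_ofReal ?_
        have hsum := sum_pow_mul_le_of_le_mul_pow (by positivity) (hqp ▸ hθ) ha
          fun k hk => hD k ((pow_le_pow_right₀ one_le_two hk).trans hK)
        rw [hqp] at hsum
        simp_rw [hterm, ← Finset.mul_sum]
        calc M * r ^ (β + α) * (8 * r) ^ (1 - β) * ∑ k ∈ Finset.range (K + 1), _
            ≤ M * r ^ (β + α) * (8 * r) ^ (1 - β)
              * (a * (2 ^ θ / (2 ^ θ - 1)) * (t / (8 * r)) ^ θ) := by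
              gcongr
              exact hsum.trans (by gcongr)
          _ = _ := by
              rw [Real.div_rpow ht.le h8r.le, Real.rpow_neg h8r.le, show θ = (1 - β) + δ from rfl,
                Real.rpow_add h8r]
              field_simp

lemma exists_lintegral_annulus_le_of_neg (hn : n ≠ 0) (hβ0 : 0 < β) (hβ1 : β < 1) (hα : α < 0) :
    ∃ c > (0 : ℝ), ∀ f : EuclideanSpace ℝ (Fin n) → ℝ, LocallyIntegrable f volume →
      campanato1Norm n α f ≠ ⊤ → ∀ (x₀ x : EuclideanSpace ℝ (Fin n)) (r t : ℝ), 0 < r →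
      x ∈ closedBall x₀ r → 8 * r < t →
      ∫⁻ y in {y : EuclideanSpace ℝ (Fin n) | 8 * r ≤ ‖x - y‖ ∧ ‖x - y‖ < t},
          ENNReal.ofReal (r ^ β * |f y - ballAvg n f x₀ r| / ‖x - y‖ ^ ((n : ℝ) - 1 + β)) ≤
        ENNReal.ofReal (c * r ^ (β + α) * t ^ (1 - β) * (campanato1Norm n α f).toReal) := by
  set s := (2 : ℝ) ^ α
  have hs0 : 0 < s := by positivity
  have hs1 : 0 < 1 - s := sub_pos.2 (Real.rpow_lt_one_of_one_lt_of_neg one_lt_two hα)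
  have hθ : 0 < (2 : ℝ) ^ (1 - β) - 1 := sub_pos.2 (Real.one_lt_rpow one_lt_two (by linarith))
  have hω := unitBallVolume_pos n
  refine ⟨4 ^ n * (1 + 2 ^ n) * unitBallVolume n ^ (α / n) * unitBallVolume n
    * (2 ^ (1 - β) / (2 ^ (1 - β) - 1)) * (s / (1 - s)), by positivity,
    fun f hf hfin x₀ x r t hr hx hrt => ?_⟩
  refine (lintegral_annulus_le hn hβ0 hβ1 hf hfin hr hx hrt (a := s / (1 - s)) (by positivity)
    le_rfl fun k _ => ?_).trans (le_of_eq ?_)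
  · rw [Real.rpow_zero, one_pow, mul_one]
    exact sum_range_pow_succ_le_of_lt_one hs0.le (by linarith) _
  · rw [neg_zero, Real.rpow_zero, add_zero]
    ring_nf

lemma exists_lintegral_annulus_le_of_eq_zero (hn : n ≠ 0) (hβ0 : 0 < β) (hβ1 : β < 1) :
    ∃ c > (0 : ℝ), ∀ f : EuclideanSpace ℝ (Fin n) → ℝ, LocallyIntegrable f volume →
      campanato1Norm n 0 f ≠ ⊤ → ∀ (x₀ x : EuclideanSpace ℝ (Fin n)) (r t : ℝ), 0 < r →
      x ∈ closedBall x₀ r → 8 * r < t →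
      ∫⁻ y in {y : EuclideanSpace ℝ (Fin n) | 8 * r ≤ ‖x - y‖ ∧ ‖x - y‖ < t},
          ENNReal.ofReal (r ^ β * |f y - ballAvg n f x₀ r| / ‖x - y‖ ^ ((n : ℝ) - 1 + β)) ≤
        ENNReal.ofReal (c * r ^ β * t ^ (1 - β) * Real.log (t / r)
          * (campanato1Norm n 0 f).toReal) := by
  have hθ : 0 < (2 : ℝ) ^ (1 - β) - 1 := sub_pos.2 (Real.one_lt_rpow one_lt_two (by linarith))
  have hlog2 : 0 < Real.log 2 := Real.log_pos one_lt_two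
  have hω := unitBallVolume_pos n
  refine ⟨4 ^ n * (1 + 2 ^ n) * unitBallVolume n
    * (2 ^ (1 - β) / (2 ^ (1 - β) - 1)) * (2 / Real.log 2), by positivity,
    fun f hf hfin x₀ x r t hr hx hrt => ?_⟩
  have htr : 1 ≤ t / r := (one_le_div hr).2 (by linarith)
  refine (lintegral_annulus_le hn hβ0 hβ1 hf hfin hr hx hrt
    (a := 2 / Real.log 2 * Real.log (t / r)) (by have := Real.log_nonneg htr; positivity) le_rfl
    fun k hk => ?_).trans (le_of_eq ?_)
  · have hpow : (2 : ℝ) ^ (k + 3) ≤ t / r := by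
      rw [le_div_iff₀ (by linarith), mul_comm] at hk
      rw [le_div_iff₀ hr, pow_add]
      linarith
    have hlog : (k + 3 : ℝ) * Real.log 2 ≤ Real.log (t / r) := by
      simpa [Real.log_pow] using Real.log_le_log (by positivity) hpow
    simp only [Real.rpow_zero, one_pow, mul_one, Finset.sum_const, Finset.card_range,
      nsmul_eq_mul]
    rw [div_mul_eq_mul_div, le_div_iff₀ hlog2]
    push_cast
    nlinarith
  · rw [neg_zero, zero_div, Real.rpow_zero, Real.rpow_zero, add_zero, add_zero]
    ring_nf

lemma exists_lintegral_annulus_le_of_pos (hn : n ≠ 0) (hβ0 : 0 < β) (hβ1 : β < 1) (hα : 0 < α) :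
    ∃ c > (0 : ℝ), ∀ f : EuclideanSpace ℝ (Fin n) → ℝ, LocallyIntegrable f volume →
      campanato1Norm n α f ≠ ⊤ → ∀ (x₀ x : EuclideanSpace ℝ (Fin n)) (r t : ℝ), 0 < r →
      x ∈ closedBall x₀ r → 8 * r < t →
      ∫⁻ y in {y : EuclideanSpace ℝ (Fin n) | 8 * r ≤ ‖x - y‖ ∧ ‖x - y‖ < t},
          ENNReal.ofReal (r ^ β * |f y - ballAvg n f x₀ r| / ‖x - y‖ ^ ((n : ℝ) - 1 + β)) ≤
        ENNReal.ofReal (c * r ^ β * t ^ (1 - β + α) * (campanato1Norm n α f).toReal) := by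
  set s := (2 : ℝ) ^ α
  have hs1 : 1 < s := Real.one_lt_rpow one_lt_two hα
  have hs1' : 0 < s - 1 := sub_pos.2 hs1
  have hθ : 0 < (2 : ℝ) ^ (1 - β + α) - 1 :=
    sub_pos.2 (Real.one_lt_rpow one_lt_two (by linarith))
  have hω := unitBallVolume_pos n
  refine ⟨4 ^ n * (1 + 2 ^ n) * unitBallVolume n ^ (α / n) * unitBallVolume n
    * (2 ^ (1 - β + α) / (2 ^ (1 - β + α) - 1)) * (s ^ 6 / (s - 1)) * 8 ^ (-α),
    by positivity, fun f hf hfin x₀ x r t hr hx hrt => ?_⟩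
  refine (lintegral_annulus_le hn hβ0 hβ1 hf hfin hr hx hrt (a := s ^ 6 / (s - 1))
    (by positivity) hα.le fun k _ => ?_).trans (le_of_eq ?_)
  · calc _ ≤ s ^ (k + 5 + 1) / (s - 1) := sum_range_pow_succ_le_of_one_lt hs1 _
      _ = _ := by ring
  · have hr' : r ^ (β + α) * (8 * r) ^ (-α) = 8 ^ (-α) * r ^ β := by
      rw [Real.rpow_add hr, Real.mul_rpow (by norm_num) hr.le, Real.rpow_neg hr.le,
        Real.rpow_neg (by norm_num)]
      field_simp
    congr 1
    linear_combination 4 ^ n * (1 + 2 ^ n) * unitBallVolume n ^ (α / n) * unitBallVolume n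
      * (campanato1Norm n α f).toReal * (2 ^ (1 - β + α) / (2 ^ (1 - β + α) - 1))
      * (s ^ 6 / (s - 1)) * t ^ (1 - β + α) * hr'

end Campanato

/-- annulus integral of r^β |f - f_B| / |x-y|^{n-1+β}, 0 < β < 1. -/
theorem stmt6 (n : ℕ) (hn : 1 ≤ n) (β α : ℝ) (hβ0 : 0 < β) (hβ1 : β < 1) :
    ∃ c > (0 : ℝ), ∀ f : EuclideanSpace ℝ (Fin n) → ℝ, LocallyIntegrable f volume →
      campanato1Norm n α f < ⊤ →
    ∀ (x₀ x : EuclideanSpace ℝ (Fin n)) (r t : ℝ), 0 < r → x ∈ closedBall x₀ r →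
      8 * r < t →
      ((α < 0 →
        ∫⁻ y in {y : EuclideanSpace ℝ (Fin n) | 8 * r ≤ ‖x - y‖ ∧ ‖x - y‖ < t},
            ENNReal.ofReal (r ^ β * |f y - ballAvg n f x₀ r| / ‖x - y‖ ^ ((n : ℝ) - 1 + β)) ≤
          ENNReal.ofReal (c * r ^ (β + α) * t ^ (1 - β) * (campanato1Norm n α f).toReal)) ∧
      (α = 0 →
        ∫⁻ y in {y : EuclideanSpace ℝ (Fin n) | 8 * r ≤ ‖x - y‖ ∧ ‖x - y‖ < t},
            ENNReal.ofReal (r ^ β * |f y - ballAvg n f x₀ r| / ‖x - y‖ ^ ((n : ℝ) - 1 + β)) ≤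
          ENNReal.ofReal (c * r ^ β * t ^ (1 - β) * Real.log (t / r) *
            (campanato1Norm n α f).toReal)) ∧
      (0 < α →
        ∫⁻ y in {y : EuclideanSpace ℝ (Fin n) | 8 * r ≤ ‖x - y‖ ∧ ‖x - y‖ < t},
            ENNReal.ofReal (r ^ β * |f y - ballAvg n f x₀ r| / ‖x - y‖ ^ ((n : ℝ) - 1 + β)) ≤
          ENNReal.ofReal (c * r ^ β * t ^ (1 - β + α) * (campanato1Norm n α f).toReal))) := by
  have hn0 : n ≠ 0 := Nat.one_le_iff_ne_zero.1 hn
  rcases lt_trichotomy α 0 with hα | rfl | hα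
  · obtain ⟨c, hc, hbound⟩ := exists_lintegral_annulus_le_of_neg hn0 hβ0 hβ1 hα
    exact ⟨c, hc, fun f hf hfin x₀ x r t hr hx hrt =>
      ⟨fun _ => hbound f hf hfin.ne x₀ x r t hr hx hrt, fun h => absurd h hα.ne,
        fun h => absurd h hα.not_gt⟩⟩
  · obtain ⟨c, hc, hbound⟩ := exists_lintegral_annulus_le_of_eq_zero hn0 hβ0 hβ1
    exact ⟨c, hc, fun f hf hfin x₀ x r t hr hx hrt =>
      ⟨fun h => absurd h (lt_irrefl 0), fun _ => hbound f hf hfin.ne x₀ x r t hr hx hrt,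
        fun h => absurd h (lt_irrefl 0)⟩⟩
  · obtain ⟨c, hc, hbound⟩ := exists_lintegral_annulus_le_of_pos hn0 hβ0 hβ1 hα
    exact ⟨c, hc, fun f hf hfin x₀ x r t hr hx hrt =>
      ⟨fun h => absurd h hα.not_gt, fun h => absurd h hα.ne',
        fun _ => hbound f hf hfin.ne x₀ x r t hr hx hrt⟩⟩
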